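/- arXiv:1706.06057 — 2 statements merged into one kernel-verified Lean document; each statement's English description precedes it below -/
import Mathlib

section
/- For any two vectors x, y in R^N and any real gamma with 1/2 < γ <= 1, one has (|x| + |y|)^{2-2γ} ((|x|^{2γ-2} x - |y|^{2γ-2} y) · (x - y)) >= (2γ - 1) |x - y|^2. -/
open RealInnerProductSpace

private lemma rpow_subadd {a b p : ℝ} (ha : 0 ≤ a) (hb : 0 ≤ b) (hp : 0 ≤ p) (hp1 : p ≤ 1) :
    (a + b) ^ p ≤ a ^ p + b ^ p := by
  have h := NNReal.rpow_add_le_add_rpow a.toNNReal b.toNNReal hp hp1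
  rw [← Real.toNNReal_add ha hb] at h
  have h2 := NNReal.coe_le_coe.2 h
  push_cast [NNReal.coe_rpow, Real.coe_toNNReal _ (by linarith : (0:ℝ) ≤ a + b),
    Real.coe_toNNReal _ ha, Real.coe_toNNReal _ hb] at h2
  exact h2

private lemma lemA {a b β : ℝ} (hb : 0 ≤ b) (hba : b ≤ a) (hβ0 : 0 < β) (hβ1 : β ≤ 1) :
    β * (a - b) ≤ (a + b) ^ (1 - β) * (a ^ β - b ^ β) := by
  rcases eq_or_lt_of_le (le_trans hb hba) with h | h
  · have hb0 : b = 0 := le_antisymm (h ▸ hba) hb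
    simp [← h, hb0]
  · have hs : -1 ≤ b / a - 1 := by
      have : 0 ≤ b / a := div_nonneg hb h.le
      linarith
    have hber := rpow_one_add_le_one_add_mul_self hs hβ0.le hβ1
    rw [add_sub_cancel] at hber
    have hbeq : b ^ β = a ^ β * (b / a) ^ β := by
      rw [← Real.mul_rpow h.le (div_nonneg hb h.le), mul_comm a, div_mul_cancel₀ _ h.ne']
    have hpow : 0 < a ^ β := Real.rpow_pos_of_pos h β
    have h7 : a ^ (β - 1) * a = a ^ β := by
      rw [← Real.rpow_add_one h.ne']
      congr 1
      ring
    have he : a ^ β * (b / a - 1) = a ^ (β - 1) * b - a ^ (β - 1) * a := by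
      rw [← h7]
      field_simp
    have he2 : β * (a ^ β * (b / a - 1)) = β * (a ^ (β - 1) * b - a ^ (β - 1) * a) := by
      rw [he]
    have h6 : a ^ β * (b / a) ^ β ≤ a ^ β * (1 + β * (b / a - 1)) :=
      mul_le_mul_of_nonneg_left hber hpow.le
    rw [← hbeq] at h6
    have hkey : β * a ^ (β - 1) * (a - b) ≤ a ^ β - b ^ β := by nlinarith [h6, he2]
    have hmono : a ^ (1 - β) ≤ (a + b) ^ (1 - β) :=
      Real.rpow_le_rpow h.le (by linarith) (by linarith)
    have hnn : 0 ≤ a ^ β - b ^ β := by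
      nlinarith [hkey, mul_nonneg (mul_nonneg hβ0.le (Real.rpow_nonneg h.le (β - 1)))
        (sub_nonneg.2 hba)]
    have hid : a ^ (1 - β) * a ^ (β - 1) = 1 := by
      rw [← Real.rpow_add h]
      norm_num
    have s1 : a ^ (1 - β) * (β * a ^ (β - 1) * (a - b)) ≤ a ^ (1 - β) * (a ^ β - b ^ β) :=
      mul_le_mul_of_nonneg_left hkey (Real.rpow_nonneg h.le _)
    have s2 : a ^ (1 - β) * (a ^ β - b ^ β) ≤ (a + b) ^ (1 - β) * (a ^ β - b ^ β) :=
      mul_le_mul_of_nonneg_right hmono hnn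
    have s3 : a ^ (1 - β) * (β * a ^ (β - 1) * (a - b)) = β * (a - b) := by
      linear_combination β * (a - b) * hid
    linarith

private lemma lemB {a b β : ℝ} (ha : 0 ≤ a) (hb : 0 ≤ b) (hβ0 : 0 < β) (hβ1 : β ≤ 1) :
    β * (a + b) ≤ (a + b) ^ (1 - β) * (a ^ β + b ^ β) := by
  have hsub : (a + b) ^ β ≤ a ^ β + b ^ β := rpow_subadd ha hb hβ0.le hβ1
  have h3 : (a + b) ^ (1 - β) * (a + b) ^ β = a + b := by
    rw [← Real.rpow_add' (by linarith) (by rw [show (1 - β) + β = (1:ℝ) by ring]; norm_num),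
      show (1 - β) + β = (1:ℝ) by ring, Real.rpow_one]
  have h4 : (a + b) ^ (1 - β) * (a + b) ^ β ≤ (a + b) ^ (1 - β) * (a ^ β + b ^ β) :=
    mul_le_mul_of_nonneg_left hsub (Real.rpow_nonneg (by linarith) _)
  nlinarith [h4, h3, mul_nonneg (by linarith : (0:ℝ) ≤ 1 - β) (by linarith : (0:ℝ) ≤ a + b)]

private lemma pow_helper {a γ : ℝ} (ha : 0 ≤ a) (hγ : 1 / 2 < γ) :
    a ^ (2 * γ - 2) * a = a ^ (2 * γ - 1) := by
  rcases eq_or_lt_of_le ha with h | h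
  · rw [← h, mul_zero, Real.zero_rpow (ne_of_gt (by linarith : (0:ℝ) < 2 * γ - 1))]
  · rw [← Real.rpow_add_one h.ne']
    congr 1
    ring

theorem monotonicity_inequality_gamma_le_one (N : ℕ) (γ : ℝ) (hγ1 : 1 / 2 < γ) (hγ2 : γ ≤ 1)
    (x y : EuclideanSpace ℝ (Fin N)) :
    (2 * γ - 1) * ‖x - y‖ ^ 2 ≤
      (‖x‖ + ‖y‖) ^ (2 - 2 * γ) *
        ⟪(‖x‖ ^ (2 * γ - 2)) • x - (‖y‖ ^ (2 * γ - 2)) • y, x - y⟫ := by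
  have hβ0 : 0 < 2 * γ - 1 := by linarith
  have hβ1 : 2 * γ - 1 ≤ 1 := by linarith
  have hip : ⟪(‖x‖ ^ (2 * γ - 2)) • x - (‖y‖ ^ (2 * γ - 2)) • y, x - y⟫
      = ‖x‖ ^ (2 * γ - 2) * ‖x‖ ^ 2 + ‖y‖ ^ (2 * γ - 2) * ‖y‖ ^ 2
        - (‖x‖ ^ (2 * γ - 2) + ‖y‖ ^ (2 * γ - 2)) * ⟪x, y⟫ := by
    simp only [inner_sub_left, inner_sub_right, real_inner_smul_left,
      real_inner_self_eq_norm_sq]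
    rw [real_inner_comm y x]
    ring
  have hns : ‖x - y‖ ^ 2 = ‖x‖ ^ 2 - 2 * ⟪x, y⟫ + ‖y‖ ^ 2 := norm_sub_sq_real x y
  have hcs := abs_real_inner_le_norm x y
  rw [abs_le] at hcs
  obtain ⟨hcs1, hcs2⟩ := hcs
  rw [hip, hns]
  have ha0 : (0:ℝ) ≤ ‖x‖ := norm_nonneg x
  have hb0 : (0:ℝ) ≤ ‖y‖ := norm_nonneg y
  set a := ‖x‖ with haa
  set b := ‖y‖ with hbb
  set t : ℝ := ⟪x, y⟫ with ht
  have he : 1 - (2 * γ - 1) = 2 - 2 * γ := by ring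
  have hu : a ^ (2 * γ - 2) * a = a ^ (2 * γ - 1) := pow_helper ha0 hγ1
  have hv : b ^ (2 * γ - 2) * b = b ^ (2 * γ - 1) := pow_helper hb0 hγ1
  have hF1 : (2 * γ - 1) * (a - b) ^ 2
      ≤ (a + b) ^ (2 - 2 * γ) * ((a ^ (2 * γ - 2) * a - b ^ (2 * γ - 2) * b) * (a - b)) := by
    rw [hu, hv]
    rcases le_total b a with hba | hab
    · have h := lemA hb0 hba hβ0 hβ1
      rw [he] at h
      have h2 := mul_le_mul_of_nonneg_right h (by linarith : (0:ℝ) ≤ a - b)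
      nlinarith [h2]
    · have h := lemA ha0 hab hβ0 hβ1
      rw [add_comm b a, he] at h
      have h2 := mul_le_mul_of_nonneg_right h (by linarith : (0:ℝ) ≤ b - a)
      nlinarith [h2]
  have hF2 : (2 * γ - 1) * (a + b) ^ 2
      ≤ (a + b) ^ (2 - 2 * γ) * ((a ^ (2 * γ - 2) * a + b ^ (2 * γ - 2) * b) * (a + b)) := by
    rw [hu, hv]
    have h := lemB ha0 hb0 hβ0 hβ1
    rw [he] at h
    have h2 := mul_le_mul_of_nonneg_right h (by linarith : (0:ℝ) ≤ a + b)
    nlinarith [h2]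
  rcases le_total ((a + b) ^ (2 - 2 * γ) * (a ^ (2 * γ - 2) + b ^ (2 * γ - 2)))
      (2 * (2 * γ - 1)) with hd | hd
  · have key : 0 ≤ (2 * (2 * γ - 1)
        - (a + b) ^ (2 - 2 * γ) * (a ^ (2 * γ - 2) + b ^ (2 * γ - 2))) * (t + a * b) :=
      mul_nonneg (by linarith) (by linarith)
    linarith [hF2, key]
  · have key : 0 ≤ ((a + b) ^ (2 - 2 * γ) * (a ^ (2 * γ - 2) + b ^ (2 * γ - 2))
        - 2 * (2 * γ - 1)) * (a * b - t) :=
      mul_nonneg (by linarith) (by linarith)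
    linarith [hF1, key]
end

section
/- Let b > 1, c > 0, α > 0, and let {y_n} be a sequence of positive reals satisfying y_{n+1} <= c b^n y_n^{1+α} for all n >= 0. Then for every n, y_{n+1} <= c^{-1/α} b^{-1/α²} (c^{1/α} b^{1/α²} y_0)^{(1+α)^{n+1}} b^{-(n+1)/α}. -/
lemma dg_eq_of_log_eq {x y : ℝ} (hx : 0 < x) (hy : 0 < y)
    (h : Real.log x = Real.log y) : x = y := by
  rw [← Real.exp_log hx, ← Real.exp_log hy, h]

theorem de_giorgi_iteration_explicit (b c α : ℝ) (hb : 1 < b) (hc : 0 < c) (hα : 0 < α)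
    (y : ℕ → ℝ) (hy : ∀ n, 0 < y n)
    (hrec : ∀ n, y (n + 1) ≤ c * b ^ n * y n ^ (1 + α)) :
    ∀ n : ℕ, y (n + 1) ≤
      c ^ (-(1 / α)) * b ^ (-(1 / α ^ 2)) *
        (c ^ (1 / α) * b ^ (1 / α ^ 2) * y 0) ^ ((1 + α) ^ (n + 1)) *
          b ^ (-((n + 1 : ℝ)) / α) := by
  have hb0 : (0:ℝ) < b := lt_trans one_pos hb
  have hy0 := hy 0
  have hα' : α ≠ 0 := ne_of_gt hα
  intro n
  induction n with
  | zero =>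
    have h := hrec 0
    simp only [pow_zero, mul_one] at h
    refine h.trans (le_of_eq ?_)
    apply dg_eq_of_log_eq (by positivity) (by positivity)
    simp (disch := positivity) only [Real.log_mul, Real.log_rpow, Real.log_pow]
    push_cast
    field_simp
    ring
  | succ n ih =>
    have h := hrec (n + 1)
    have hmono : y (n + 1) ^ (1 + α) ≤ (c ^ (-(1 / α)) * b ^ (-(1 / α ^ 2)) *
        (c ^ (1 / α) * b ^ (1 / α ^ 2) * y 0) ^ ((1 + α) ^ (n + 1)) *
          b ^ (-((n + 1 : ℝ)) / α)) ^ (1 + α) :=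
      Real.rpow_le_rpow (le_of_lt (hy (n + 1))) ih (by positivity)
    have h2 : y (n + 1 + 1) ≤ c * b ^ (n + 1) *
        (c ^ (-(1 / α)) * b ^ (-(1 / α ^ 2)) *
          (c ^ (1 / α) * b ^ (1 / α ^ 2) * y 0) ^ ((1 + α) ^ (n + 1)) *
            b ^ (-((n + 1 : ℝ)) / α)) ^ (1 + α) := by
      refine h.trans ?_
      exact mul_le_mul_of_nonneg_left hmono (by positivity)
    refine h2.trans (le_of_eq ?_)
    apply dg_eq_of_log_eq (by positivity) (by positivity)
    simp (disch := positivity) only [Real.log_mul, Real.log_rpow, Real.log_pow]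
    push_cast
    field_simp
    ring
end
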